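/- arXiv:1610.00151 — 6 statements merged into one kernel-verified Lean document; each statement's English description precedes it below -/
import Mathlib

section
/- Let M ⊆ S_k^n be a (⊓,⊔)-closed set and let x ∈ M. Let I = {y ∈ M : y ⪯ x} be the principal ideal of x in M. Then the map y ↦ supp y is injective on I, and for all y, z ∈ I it satisfies supp(y ⊓ z) = supp y ∩ supp z and supp(y ⊔ z) = supp y ∪ supp z, and y ⪯ z iff supp y ⊆ supp z. Consequently (I, ⪯) is a distributive lattice in which the meet of y and z is y ⊓ z and the join of y and z is y ⊔ z. -/
/-- The partial order on `S_k = {0,1,…,k}`: `a ⪯ b` iff `a = 0` or `a = b`. -/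
def pre {k : ℕ} (a b : Fin (k + 1)) : Prop := a = 0 ∨ a = b

instance {k : ℕ} (a b : Fin (k + 1)) : Decidable (pre a b) :=
  decidable_of_iff (a = 0 ∨ a = b) Iff.rfl

/-- The componentwise order `⪯` on `S_k^n`. -/
def preV {k n : ℕ} (x y : Fin n → Fin (k + 1)) : Prop := ∀ i, pre (x i) (y i)

/-- The operation `⊓` on `S_k^n`. -/
def sqcap {k n : ℕ} (x y : Fin n → Fin (k + 1)) : Fin n → Fin (k + 1) :=
  fun i => if pre (x i) (y i) ∨ pre (y i) (x i) then min (x i) (y i) else 0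

/-- The operation `⊔` on `S_k^n`. -/
def sqcup {k n : ℕ} (x y : Fin n → Fin (k + 1)) : Fin n → Fin (k + 1) :=
  fun i => if pre (x i) (y i) ∨ pre (y i) (x i) then max (x i) (y i) else 0

/-- A `(⊓,⊔)`-closed subset of `S_k^n`. -/
def closedSet {k n : ℕ} (M : Set (Fin n → Fin (k + 1))) : Prop :=
  M.Nonempty ∧ ∀ x ∈ M, ∀ y ∈ M, sqcap x y ∈ M ∧ sqcup x y ∈ M

/-- Strict version of `⪯`. -/
def strictPreV {k n : ℕ} (x y : Fin n → Fin (k + 1)) : Prop := preV x y ∧ x ≠ y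

/-- `m` is the minimum element of `M` with respect to `⪯`. -/
def isMinOf {k n : ℕ} (M : Set (Fin n → Fin (k + 1))) (m : Fin n → Fin (k + 1)) : Prop :=
  m ∈ M ∧ ∀ x ∈ M, preV m x

/-- `u` is the least upper bound of `S` inside `(M, ⪯)`. -/
def isLUBof {k n : ℕ} (M S : Set (Fin n → Fin (k + 1))) (u : Fin n → Fin (k + 1)) : Prop :=
  u ∈ M ∧ (∀ s ∈ S, preV s u) ∧ ∀ w ∈ M, (∀ s ∈ S, preV s w) → preV u w

/-- `x` is a join-irreducible element of `M`. -/
def joinIrr {k n : ℕ} (M : Set (Fin n → Fin (k + 1))) (x : Fin n → Fin (k + 1)) : Prop :=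
  x ∈ M ∧ ¬ isMinOf M x ∧ ¬ isLUBof M {y | y ∈ M ∧ strictPreV y x} x

/-- A `(⊓,⊔)`-closed set is simple if its minimum element is the all-zero vector. -/
def simpleSet {k n : ℕ} (M : Set (Fin n → Fin (k + 1))) : Prop :=
  isMinOf M (fun _ => 0)

/-- `y` is a lower cover of `x` in `M`. -/
def lowerCover {k n : ℕ} (M : Set (Fin n → Fin (k + 1)))
    (y x : Fin n → Fin (k + 1)) : Prop :=
  y ∈ M ∧ strictPreV y x ∧ ¬ ∃ z ∈ M, strictPreV y z ∧ strictPreV z x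

/-- `d` is the differential of `x` in `M` (with respect to some lower cover of `x`). -/
def isDiff {k n : ℕ} (M : Set (Fin n → Fin (k + 1)))
    (x d : Fin n → Fin (k + 1)) : Prop :=
  ∃ y, lowerCover M y x ∧ ∀ i, d i = if x i ≠ 0 ∧ y i = 0 then x i else 0

/-- The support of `x ∈ S_k^n`. -/
def supp {k n : ℕ} (x : Fin n → Fin (k + 1)) : Set (Fin n) := {i | x i ≠ 0}

/-- `x ⌣ y`: `x` and `y` have no common upper bound in `S_k^n`. -/
def incons {k n : ℕ} (x y : Fin n → Fin (k + 1)) : Prop :=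
  ∃ i, x i ≠ 0 ∧ y i ≠ 0 ∧ x i ≠ y i

lemma cap_eq' {k n : ℕ} (x y z : Fin n → Fin (k + 1))
    (hy : ∀ i, y i = 0 ∨ y i = x i) (hz : ∀ i, z i = 0 ∨ z i = x i) (i : Fin n) :
    sqcap y z i = if y i ≠ 0 ∧ z i ≠ 0 then x i else 0 := by
  rcases hy i with h1 | h1 <;> rcases hz i with h2 | h2 <;>
    simp [sqcap, pre, h1, h2] <;> first | tauto | (split <;> simp_all)

lemma cup_eq' {k n : ℕ} (x y z : Fin n → Fin (k + 1))
    (hy : ∀ i, y i = 0 ∨ y i = x i) (hz : ∀ i, z i = 0 ∨ z i = x i) (i : Fin n) :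
    sqcup y z i = if y i ≠ 0 ∨ z i ≠ 0 then x i else 0 := by
  rcases hy i with h1 | h1 <;> rcases hz i with h2 | h2 <;>
    simp [sqcup, pre, h1, h2] <;> first | tauto | (split <;> simp_all)

/-- The principal ideal of `x` in a `(⊓,⊔)`-closed set `M` is mapped injectively
by `supp` onto a family of sets closed under `∩` and `∪`, the map being an order
isomorphism; consequently the principal ideal is a distributive lattice with meet
`⊓` and join `⊔`. -/
theorem principalIdeal_distributive (k n : ℕ) (hk : 0 < k) (hn : 0 < n)
    (M : Set (Fin n → Fin (k + 1))) (hM : closedSet M)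
    (x : Fin n → Fin (k + 1)) (hx : x ∈ M)
    (I : Set (Fin n → Fin (k + 1))) (hI : I = {y | y ∈ M ∧ preV y x}) :
    Set.InjOn supp I ∧
    (∀ y ∈ I, ∀ z ∈ I, sqcap y z ∈ I ∧ sqcup y z ∈ I ∧
      supp (sqcap y z) = supp y ∩ supp z ∧ supp (sqcup y z) = supp y ∪ supp z ∧
      (preV y z ↔ supp y ⊆ supp z)) ∧
    (∀ y ∈ I, ∀ z ∈ I, ∀ w ∈ I,
      sqcap y (sqcup z w) = sqcup (sqcap y z) (sqcap y w)) := by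
  subst hI
  have hcomp : ∀ y ∈ {y | y ∈ M ∧ preV y x}, ∀ i, y i = 0 ∨ y i = x i := by
    intro y hy i
    rcases hy.2 i with h | h
    · exact Or.inl h
    · exact Or.inr h
  refine ⟨?_, ?_, ?_⟩
  · -- injectivity
    intro y hy z hz hsupp
    funext i
    have hy' := hcomp y hy i
    have hz' := hcomp z hz i
    have hmem : i ∈ supp y ↔ i ∈ supp z := by rw [hsupp]
    simp only [supp, Set.mem_setOf_eq] at hmem
    rcases hy' with h1 | h1 <;> rcases hz' with h2 | h2
    · rw [h1, h2]
    · rw [h1, h2]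
      by_contra h
      have : z i ≠ 0 := fun hc => h (by rw [h2] at hc; exact hc.symm)
      have := hmem.mpr this
      exact this h1
    · rw [h1, h2]
      by_contra h
      have : y i ≠ 0 := fun hc => (h (by rw [h1] at hc; exact hc))
      have := hmem.mp this
      exact this h2
    · rw [h1, h2]
  · intro y hy z hz
    have hy' := hcomp y hy
    have hz' := hcomp z hz
    have hcap := cap_eq' x y z hy' hz'
    have hcup := cup_eq' x y z hy' hz'
    have hcapP : ∀ i, sqcap y z i = 0 ∨ sqcap y z i = x i := by
      intro i; rw [hcap i]; split <;> simp
    have hcupP : ∀ i, sqcup y z i = 0 ∨ sqcup y z i = x i := by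
      intro i; rw [hcup i]; split <;> simp
    have hcapM := (hM.2 y hy.1 z hz.1).1
    have hcupM := (hM.2 y hy.1 z hz.1).2
    refine ⟨⟨hcapM, fun i => ?_⟩, ⟨hcupM, fun i => ?_⟩, ?_, ?_, ?_⟩
    · rcases hcapP i with h | h
      · exact Or.inl h
      · exact Or.inr h
    · rcases hcupP i with h | h
      · exact Or.inl h
      · exact Or.inr h
    · ext i
      simp only [supp, Set.mem_setOf_eq, Set.mem_inter_iff, hcap i]
      split_ifs with h
      · constructor
        · intro _; exact h
        · intro _
          rcases hy' i with h1 | h1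
          · exact absurd h1 h.1
          · rw [← h1] at *; exact h.1
      · push_neg at h
        constructor
        · intro hc; exact absurd rfl hc
        · rintro ⟨h1, h2⟩; exact absurd (h h1) h2
    · ext i
      simp only [supp, Set.mem_setOf_eq, Set.mem_union, hcup i]
      split_ifs with h
      · constructor
        · intro _; exact h
        · intro hc
          rcases hc with hc | hc
          · rcases hy' i with h1 | h1
            · exact absurd h1 hc
            · rw [← h1]; exact hc
          · rcases hz' i with h1 | h1
            · exact absurd h1 hc
            · rw [← h1]; exact hc
      · push_neg at h
        constructor
        · intro hc; exact absurd rfl hc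
        · rintro (h1 | h1)
          · exact absurd h.1 (by simpa using h1)
          · exact absurd h.2 (by simpa using h1)
    · constructor
      · intro hpre i hi
        simp only [supp, Set.mem_setOf_eq] at hi ⊢
        rcases hpre i with h | h
        · exact absurd h hi
        · rw [← h]; exact hi
      · intro hsub i
        rcases hy' i with h1 | h1
        · exact Or.inl h1
        · by_cases h0 : y i = 0
          · exact Or.inl h0
          · have : i ∈ supp z := hsub h0
            rcases hz' i with h2 | h2
            · exact absurd h2 this
            · exact Or.inr (by rw [h1, h2])
  · intro y hy z hz w hw
    have hy' := hcomp y hy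
    have hz' := hcomp z hz
    have hw' := hcomp w hw
    have hcupzw := cup_eq' x z w hz' hw'
    have hcupzwP : ∀ i, sqcup z w i = 0 ∨ sqcup z w i = x i := by
      intro i; rw [hcupzw i]; split <;> simp
    have hcapyz := cap_eq' x y z hy' hz'
    have hcapyw := cap_eq' x y w hy' hw'
    have hcapyzP : ∀ i, sqcap y z i = 0 ∨ sqcap y z i = x i := by
      intro i; rw [hcapyz i]; split <;> simp
    have hcapywP : ∀ i, sqcap y w i = 0 ∨ sqcap y w i = x i := by
      intro i; rw [hcapyw i]; split <;> simp
    funext i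
    rw [cap_eq' x y (sqcup z w) hy' hcupzwP i,
        cup_eq' x (sqcap y z) (sqcap y w) hcapyzP hcapywP i,
        hcapyz i, hcapyw i, hcupzw i]
    by_cases hxy : y i = 0 <;> by_cases hxz : z i = 0 <;> by_cases hxw : w i = 0 <;>
      simp [hxy, hxz, hxw]
end

section
/- Let M ⊆ S_k^n be a (⊓,⊔)-closed set. For a nonempty consistent ideal I of J(M), define ⋁I ∈ S_k^n by (⋁I)_i = α if some x ∈ I has x_i = α ≠ 0 (this nonzero value α is unique by consistency) and (⋁I)_i = 0 otherwise. Then the map sending the empty set to the minimum element of M and a nonempty consistent ideal I to ⋁I is a bijection from the family of consistent ideals of J(M) onto M, and it is an order isomorphism: for consistent ideals I and I', I ⊆ I' iff the corresponding elements of M satisfy ⪯. -/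
/-- A consistent ideal of `J(M)`: a downward-closed subset of the
join-irreducible elements of `M` containing no inconsistent pair. -/
def consIdeal {k n : ℕ} (M : Set (Fin n → Fin (k + 1)))
    (I : Set (Fin n → Fin (k + 1))) : Prop :=
  (∀ x ∈ I, joinIrr M x) ∧
  (∀ x y, joinIrr M x → y ∈ I → preV x y → x ∈ I) ∧
  (∀ x ∈ I, ∀ y ∈ I, ¬ incons x y)

/-- `v = ⋁ I`: `v i` is the (unique, by consistency) nonzero value `x i` of
some `x ∈ I` if one exists, and `0` otherwise. -/
def supVec {k n : ℕ} (I : Set (Fin n → Fin (k + 1)))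
    (v : Fin n → Fin (k + 1)) : Prop :=
  ∀ i, (v i ≠ 0 → ∃ x ∈ I, x i = v i) ∧ (v i = 0 → ∀ x ∈ I, x i = 0)

/-- The graph of the map sending `∅` to the minimum of `M` and a nonempty
consistent ideal `I` to `⋁ I`. -/
def repMap {k n : ℕ} (M : Set (Fin n → Fin (k + 1)))
    (I : Set (Fin n → Fin (k + 1))) (v : Fin n → Fin (k + 1)) : Prop :=
  (I = ∅ ∧ isMinOf M v) ∨ (I.Nonempty ∧ supVec I v)


section Aux

variable {k n : ℕ}

lemma pre_refl (a : Fin (k + 1)) : pre a a := Or.inr rfl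

lemma pre_zero (a : Fin (k + 1)) : pre 0 a := Or.inl rfl

lemma pre_ne {a b : Fin (k + 1)} (h : pre a b) (ha : a ≠ 0) : a = b := h.resolve_left ha

lemma pre_trans {a b c : Fin (k + 1)} (h1 : pre a b) (h2 : pre b c) : pre a c := by
  rcases h1 with h | h
  · exact Or.inl h
  · subst h; exact h2

lemma pre_antisymm {a b : Fin (k + 1)} (h1 : pre a b) (h2 : pre b a) : a = b := by
  rcases h1 with h | h
  · rcases h2 with h' | h'
    · rw [h, h']
    · exact h'.symm
  · exact h

lemma preV_refl (x : Fin n → Fin (k + 1)) : preV x x := fun i => pre_refl _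

lemma preV_trans {x y z : Fin n → Fin (k + 1)} (h1 : preV x y) (h2 : preV y z) :
    preV x z := fun i => pre_trans (h1 i) (h2 i)

lemma preV_antisymm {x y : Fin n → Fin (k + 1)} (h1 : preV x y) (h2 : preV y x) :
    x = y := funext fun i => pre_antisymm (h1 i) (h2 i)

lemma sqcap_le_left (x y : Fin n → Fin (k + 1)) : preV (sqcap x y) x := by
  intro i
  unfold sqcap
  by_cases h : pre (x i) (y i) ∨ pre (y i) (x i)
  · rw [if_pos h]
    rcases h with (h0 | he) | (h0 | he)
    · rw [min_eq_left (h0 ▸ Fin.zero_le _), h0]; exact pre_zero _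
    · rw [min_eq_left (le_of_eq he)]; exact pre_refl _
    · rw [min_eq_right (h0 ▸ Fin.zero_le _), h0]; exact pre_zero _
    · rw [min_eq_right (le_of_eq he)]; rw [he]; exact pre_refl _
  · rw [if_neg h]; exact pre_zero _

lemma sqcap_le_right (x y : Fin n → Fin (k + 1)) : preV (sqcap x y) y := by
  intro i
  unfold sqcap
  by_cases h : pre (x i) (y i) ∨ pre (y i) (x i)
  · rw [if_pos h]
    rcases h with (h0 | he) | (h0 | he)
    · rw [min_eq_left (h0 ▸ Fin.zero_le _), h0]; exact pre_zero _
    · rw [min_eq_left (le_of_eq he), he]; exact pre_refl _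
    · rw [min_eq_right (h0 ▸ Fin.zero_le _), h0]; exact pre_zero _
    · rw [min_eq_right (le_of_eq he)]; exact pre_refl _
  · rw [if_neg h]; exact pre_zero _

lemma sqcup_left {x y : Fin n → Fin (k + 1)} (h : ¬ incons x y) : preV x (sqcup x y) := by
  intro i
  by_cases hx : x i = 0
  · exact Or.inl hx
  unfold sqcup
  by_cases hy : y i = 0
  · rw [if_pos (show pre (x i) (y i) ∨ pre (y i) (x i) from Or.inr (Or.inl hy)), max_eq_left (hy ▸ Fin.zero_le _)]
    exact pre_refl _
  · have he : x i = y i := by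
      by_contra hne
      exact h ⟨i, hx, hy, hne⟩
    rw [if_pos (show pre (x i) (y i) ∨ pre (y i) (x i) from Or.inl (Or.inr he)), he, max_self]
    exact pre_refl _

lemma sqcup_right {x y : Fin n → Fin (k + 1)} (h : ¬ incons x y) : preV y (sqcup x y) := by
  intro i
  by_cases hy : y i = 0
  · exact Or.inl hy
  unfold sqcup
  by_cases hx : x i = 0
  · rw [if_pos (show pre (x i) (y i) ∨ pre (y i) (x i) from Or.inl (Or.inl hx)), max_eq_right (hx ▸ Fin.zero_le _)]
    exact pre_refl _
  · have he : x i = y i := by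
      by_contra hne
      exact h ⟨i, hx, hy, hne⟩
    rw [if_pos (show pre (x i) (y i) ∨ pre (y i) (x i) from Or.inl (Or.inr he)), he, max_self]
    exact pre_refl _

lemma sqcup_coord (x y : Fin n → Fin (k + 1)) (i : Fin n) :
    sqcup x y i = x i ∨ sqcup x y i = y i ∨ sqcup x y i = 0 := by
  unfold sqcup
  by_cases h : pre (x i) (y i) ∨ pre (y i) (x i)
  · rw [if_pos h]
    rcases max_choice (x i) (y i) with h' | h'
    · exact Or.inl h'
    · exact Or.inr (Or.inl h')
  · rw [if_neg h]; exact Or.inr (Or.inr rfl)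

lemma fold_sup {M : Set (Fin n → Fin (k + 1))} (hM : closedSet M)
    (S : Finset (Fin n → Fin (k + 1))) (hne : S.Nonempty)
    (hsub : ∀ x ∈ S, x ∈ M) (hcons : ∀ x ∈ S, ∀ y ∈ S, ¬ incons x y) :
    ∃ w ∈ M, (∀ x ∈ S, preV x w) ∧ ∀ i, w i ≠ 0 → ∃ x ∈ S, x i = w i := by
  classical
  induction S using Finset.induction_on with
  | empty => exact absurd hne Finset.not_nonempty_empty
  | @insert a S' haS ih =>
    by_cases hS' : S'.Nonempty
    · obtain ⟨w', hw'M, hw'ub, hw'wit⟩ := ih hS'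
        (fun x hx => hsub x (Finset.mem_insert_of_mem hx))
        (fun x hx y hy => hcons x (Finset.mem_insert_of_mem hx) y (Finset.mem_insert_of_mem hy))
      have haw' : ¬ incons a w' := by
        rintro ⟨i, hai, hwi, hne'⟩
        obtain ⟨x, hxS, hxi⟩ := hw'wit i hwi
        exact hcons a (Finset.mem_insert_self a S') x (Finset.mem_insert_of_mem hxS)
          ⟨i, hai, by rw [hxi]; exact hwi, by rw [hxi]; exact hne'⟩
      have haM : a ∈ M := hsub a (Finset.mem_insert_self a S')
      refine ⟨sqcup a w', (hM.2 a haM w' hw'M).2, ?_, ?_⟩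
      · intro x hx
        rcases Finset.mem_insert.mp hx with rfl | hx'
        · exact sqcup_left haw'
        · exact preV_trans (hw'ub x hx') (sqcup_right haw')
      · intro i hi
        rcases sqcup_coord a w' i with h | h | h
        · exact ⟨a, Finset.mem_insert_self a S', h.symm⟩
        · have : w' i ≠ 0 := by rw [← h]; exact hi
          obtain ⟨x, hxS, hxi⟩ := hw'wit i this
          exact ⟨x, Finset.mem_insert_of_mem hxS, by rw [hxi, h]⟩
        · exact absurd h hi
    · have hS'e : S' = ∅ := Finset.not_nonempty_iff_eq_empty.mp hS'
      subst hS'e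
      have haM : a ∈ M := hsub a (Finset.mem_insert_self a ∅)
      refine ⟨a, haM, ?_, ?_⟩
      · intro x hx
        rcases Finset.mem_insert.mp hx with rfl | hx'
        · exact preV_refl _
        · exact absurd hx' (Finset.notMem_empty x)
      · intro i _
        exact ⟨a, Finset.mem_insert_self a ∅, rfl⟩

lemma exists_min {M : Set (Fin n → Fin (k + 1))} (hM : closedSet M) :
    ∃ m, isMinOf M m := by
  classical
  have main : ∀ S : Finset (Fin n → Fin (k + 1)), S.Nonempty → (∀ x ∈ S, x ∈ M) →
      ∃ m ∈ M, ∀ x ∈ S, preV m x := by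
    intro S
    induction S using Finset.induction_on with
    | empty => exact fun h _ => absurd h Finset.not_nonempty_empty
    | @insert a S' haS ih =>
      intro _ hsub
      have haM : a ∈ M := hsub a (Finset.mem_insert_self a S')
      by_cases hS' : S'.Nonempty
      · obtain ⟨m', hm'M, hm'⟩ := ih hS' (fun x hx => hsub x (Finset.mem_insert_of_mem hx))
        refine ⟨sqcap a m', (hM.2 a haM m' hm'M).1, ?_⟩
        intro x hx
        rcases Finset.mem_insert.mp hx with rfl | hx'
        · exact sqcap_le_left _ _
        · exact preV_trans (sqcap_le_right a m') (hm' x hx')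
      · have hS'e : S' = ∅ := Finset.not_nonempty_iff_eq_empty.mp hS'
        subst hS'e
        refine ⟨a, haM, ?_⟩
        intro x hx
        rcases Finset.mem_insert.mp hx with rfl | hx'
        · exact preV_refl _
        · exact absurd hx' (Finset.notMem_empty x)
  obtain ⟨v, hv⟩ := hM.1
  have hfin : M.Finite := Set.toFinite M
  obtain ⟨m, hmM, hm⟩ := main hfin.toFinset ⟨v, hfin.mem_toFinset.mpr hv⟩
    (fun x hx => hfin.mem_toFinset.mp hx)
  exact ⟨m, hmM, fun x hx => hm x (hfin.mem_toFinset.mpr hx)⟩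

lemma strictPreV_wf : WellFounded (fun a b : Fin n → Fin (k + 1) => strictPreV a b) := by
  letI : IsTrans (Fin n → Fin (k + 1)) (fun a b => strictPreV a b) := by
    constructor
    intro a b c hab hbc
    refine ⟨preV_trans hab.1 hbc.1, ?_⟩
    rintro rfl
    exact hbc.2 (preV_antisymm hbc.1 hab.1)
  letI : IsIrrefl (Fin n → Fin (k + 1)) (fun a b => strictPreV a b) :=
    ⟨fun a h => h.2 rfl⟩
  exact Finite.wellFounded_of_trans_of_irrefl _

lemma key {M : Set (Fin n → Fin (k + 1))} (hM : closedSet M) {m₀} (hmin : isMinOf M m₀) :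
    ∀ v, v ∈ M → v ≠ m₀ →
      (∃ x, joinIrr M x ∧ preV x v) ∧
      (∀ i, v i ≠ 0 → ∃ x, joinIrr M x ∧ preV x v ∧ x i = v i) := by
  intro v
  refine strictPreV_wf.induction
    (C := fun v => v ∈ M → v ≠ m₀ →
      (∃ x, joinIrr M x ∧ preV x v) ∧
      (∀ i, v i ≠ 0 → ∃ x, joinIrr M x ∧ preV x v ∧ x i = v i)) v ?_
  clear v
  intro v ih hv hne
  by_cases hji : joinIrr M v
  · exact ⟨⟨v, hji, preV_refl v⟩, fun i _ => ⟨v, hji, preV_refl v, rfl⟩⟩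
  have hnotmin : ¬ isMinOf M v := fun h => hne (preV_antisymm (h.2 m₀ hmin.1) (hmin.2 v hv))
  have hlub : isLUBof M {y | y ∈ M ∧ strictPreV y v} v := by
    by_contra hnl
    exact hji ⟨hv, hnotmin, hnl⟩
  have hLcons : ∀ x ∈ {y | y ∈ M ∧ strictPreV y v}, ∀ y ∈ {y | y ∈ M ∧ strictPreV y v},
      ¬ incons x y := by
    rintro x hx y hy ⟨i, hxi, hyi, hnexy⟩
    exact hnexy ((pre_ne (hx.2.1 i) hxi).trans (pre_ne (hy.2.1 i) hyi).symm)
  have hy : ∃ y ∈ {y | y ∈ M ∧ strictPreV y v}, y ≠ m₀ := by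
    by_contra h
    push_neg at h
    have : preV v m₀ := hlub.2.2 m₀ hmin.1 (fun s hs => by rw [h s hs]; exact preV_refl _)
    exact hne (preV_antisymm this (hmin.2 v hv))
  obtain ⟨y, hyL, hym⟩ := hy
  have part1 : ∃ x, joinIrr M x ∧ preV x v := by
    obtain ⟨x, hx, hxy⟩ := (ih y hyL.2 hyL.1 hym).1
    exact ⟨x, hx, preV_trans hxy hyL.2.1⟩
  refine ⟨part1, fun i hi => ?_⟩
  by_cases hm0 : m₀ i = 0
  · have hex : ∃ y' ∈ {y | y ∈ M ∧ strictPreV y v}, y' i = v i := by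
      by_contra hc
      push_neg at hc
      have hfin : ({y | y ∈ M ∧ strictPreV y v} : Set _).Finite := Set.toFinite _
      obtain ⟨w, hwM, hwub, hwit⟩ := fold_sup hM hfin.toFinset ⟨y, hfin.mem_toFinset.mpr hyL⟩
        (fun x hx => (hfin.mem_toFinset.mp hx).1)
        (fun x hx y' hy' => hLcons x (hfin.mem_toFinset.mp hx) y' (hfin.mem_toFinset.mp hy'))
      have hvw : preV v w := hlub.2.2 w hwM (fun s hs => hwub s (hfin.mem_toFinset.mpr hs))
      have hwiv : v i = w i := pre_ne (hvw i) hi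
      obtain ⟨y', hy'S, hy'i⟩ := hwit i (by rw [← hwiv]; exact hi)
      exact hc y' (hfin.mem_toFinset.mp hy'S) (by rw [hy'i, hwiv])
    obtain ⟨y', hy'L, hy'i⟩ := hex
    have hy'ne : y' ≠ m₀ := by
      rintro rfl
      rw [hy'i] at hm0
      exact hi hm0
    obtain ⟨x, hx, hxy, hxi⟩ := (ih y' hy'L.2 hy'L.1 hy'ne).2 i (by rw [hy'i]; exact hi)
    exact ⟨x, hx, preV_trans hxy hy'L.2.1, by rw [hxi, hy'i]⟩
  · obtain ⟨x, hx, hxv⟩ := part1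
    have hx_i : m₀ i = x i := pre_ne (hmin.2 x hx.1 i) hm0
    have hv_i : m₀ i = v i := pre_ne (hmin.2 v hv i) hm0
    exact ⟨x, hx, hxv, by rw [← hx_i, hv_i]⟩

lemma supVec_ub {I : Set (Fin n → Fin (k + 1))} {v}
    (hcons : ∀ x ∈ I, ∀ y ∈ I, ¬ incons x y) (hs : supVec I v) {x} (hx : x ∈ I) :
    preV x v := by
  intro i
  by_cases hxi : x i = 0
  · exact Or.inl hxi
  by_cases hvi : v i = 0
  · exact absurd ((hs i).2 hvi x hx) hxi
  obtain ⟨y, hy, hyi⟩ := (hs i).1 hvi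
  right
  by_contra hnexy
  exact hcons x hx y hy ⟨i, hxi, by rw [hyi]; exact hvi, by rw [hyi]; exact hnexy⟩

lemma supVec_unique {I : Set (Fin n → Fin (k + 1))} {v v'}
    (hcons : ∀ x ∈ I, ∀ y ∈ I, ¬ incons x y) (h1 : supVec I v) (h2 : supVec I v') :
    v = v' := by
  funext i
  by_cases hv : v i = 0
  · by_cases hv' : v' i = 0
    · rw [hv, hv']
    · obtain ⟨x, hx, hxi⟩ := (h2 i).1 hv'
      rw [(h1 i).2 hv x hx] at hxi
      exact absurd hxi.symm hv'
  · obtain ⟨x, hx, hxi⟩ := (h1 i).1 hv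
    by_cases hv' : v' i = 0
    · rw [(h2 i).2 hv' x hx] at hxi
      exact absurd hxi.symm hv
    · obtain ⟨y, hy, hyi⟩ := (h2 i).1 hv'
      have hxy : x i = y i := by
        by_contra hne'
        exact hcons x hx y hy ⟨i, by rw [hxi]; exact hv, by rw [hyi]; exact hv', hne'⟩
      rw [← hxi, hxy, hyi]

lemma exists_supVec {M I : Set (Fin n → Fin (k + 1))} (hM : closedSet M)
    (hI : consIdeal M I) (hne : I.Nonempty) :
    ∃ w ∈ M, supVec I w := by
  classical
  have hfin : I.Finite := Set.toFinite I
  obtain ⟨x₀, hx₀⟩ := hne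
  obtain ⟨w, hwM, hwub, hwit⟩ := fold_sup hM hfin.toFinset ⟨x₀, hfin.mem_toFinset.mpr hx₀⟩
    (fun x hx => (hI.1 x (hfin.mem_toFinset.mp hx)).1)
    (fun x hx y hy => hI.2.2 x (hfin.mem_toFinset.mp hx) y (hfin.mem_toFinset.mp hy))
  refine ⟨w, hwM, fun i => ⟨?_, ?_⟩⟩
  · intro hwi
    obtain ⟨x, hxS, hxi⟩ := hwit i hwi
    exact ⟨x, hfin.mem_toFinset.mp hxS, hxi⟩
  · intro hwi x hx
    rcases hwub x (hfin.mem_toFinset.mpr hx) i with h0 | he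
    · exact h0
    · rw [he, hwi]

lemma joinIrr_mem_ideal {M : Set (Fin n → Fin (k + 1))} (hM : closedSet M)
    {m₀} (hmin : isMinOf M m₀) {I v} (hI : consIdeal M I) (hs : supVec I v)
    {x} (hx : joinIrr M x) (hle : preV x v) : x ∈ I := by
  by_contra hxI
  have hxm : x ≠ m₀ := by
    rintro rfl
    exact hx.2.1 hmin
  have stepA : ∀ i, x i ≠ 0 → m₀ i = 0 → ∃ t, (t ∈ I ∧ preV t x) ∧ t i = x i := by
    intro i hxi hm0
    have hvi : x i = v i := pre_ne (hle i) hxi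
    obtain ⟨y, hyI, hyi⟩ := (hs i).1 (by rw [← hvi]; exact hxi)
    have hyM : y ∈ M := (hI.1 y hyI).1
    have hzM : sqcap x y ∈ M := (hM.2 x hx.1 y hyM).1
    have hxyi : x i = y i := by rw [hyi, ← hvi]
    have hzi : sqcap x y i = x i := by
      unfold sqcap
      rw [if_pos (show pre (x i) (y i) ∨ pre (y i) (x i) from Or.inl (Or.inr hxyi)),
        hxyi, min_self, ← hxyi]
    have hzm : sqcap x y ≠ m₀ := by
      intro h
      rw [h] at hzi
      rw [hm0] at hzi
      exact hxi hzi.symm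
    obtain ⟨t, ht, htz, hti⟩ := (key hM hmin (sqcap x y) hzM hzm).2 i (by rw [hzi]; exact hxi)
    exact ⟨t, ⟨hI.2.1 t y ht hyI (preV_trans htz (sqcap_le_right x y)),
      preV_trans htz (sqcap_le_left x y)⟩, by rw [hti, hzi]⟩
  have hj : ∃ j, m₀ j = 0 ∧ x j ≠ 0 := by
    by_contra hc
    push_neg at hc
    apply hxm
    refine preV_antisymm ?_ (hmin.2 x hx.1)
    intro j
    by_cases h0 : m₀ j = 0
    · exact Or.inl (hc j h0)
    · exact Or.inr (pre_ne (hmin.2 x hx.1 j) h0).symm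
  obtain ⟨j, hj0, hjx⟩ := hj
  obtain ⟨t₀, ht₀T, _⟩ := stepA j hjx hj0
  have stepB : ∀ i, x i ≠ 0 → ∃ t, (t ∈ I ∧ preV t x) ∧ t i = x i := by
    intro i hxi
    by_cases hm0 : m₀ i = 0
    · exact stepA i hxi hm0
    · refine ⟨t₀, ht₀T, ?_⟩
      have ht₀M : t₀ ∈ M := (hI.1 t₀ ht₀T.1).1
      exact (pre_ne (hmin.2 t₀ ht₀M i) hm0).symm.trans (pre_ne (hmin.2 x hx.1 i) hm0)
  apply hx.2.2
  refine ⟨hx.1, fun s hs' => hs'.2.1, fun u huM hub => ?_⟩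
  intro i
  by_cases hxi : x i = 0
  · exact Or.inl hxi
  obtain ⟨t, htT, hti⟩ := stepB i hxi
  have htL : t ∈ M ∧ strictPreV t x := by
    refine ⟨(hI.1 t htT.1).1, htT.2, ?_⟩
    rintro rfl
    exact hxI htT.1
  have htu : preV t u := hub t htL
  right
  rw [← hti]
  exact pre_ne (htu i) (by rw [hti]; exact hxi)

end Aux

/-- Birkhoff-type representation: the map `I ↦ ⋁ I` (with `∅ ↦ min M`) is a
well-defined bijection from the consistent ideals of `J(M)` onto `M`, and is an
order isomorphism with respect to `⊆` and `⪯`. -/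
theorem closedSet_pip_representation (k n : ℕ) (hk : 0 < k) (hn : 0 < n)
    (M : Set (Fin n → Fin (k + 1))) (hM : closedSet M) :
    (∀ I, consIdeal M I → ∃! v, repMap M I v) ∧
    (∀ I v, consIdeal M I → repMap M I v → v ∈ M) ∧
    (∀ v ∈ M, ∃ I, consIdeal M I ∧ repMap M I v) ∧
    (∀ I I' v v', consIdeal M I → consIdeal M I' →
      repMap M I v → repMap M I' v' → (I ⊆ I' ↔ preV v v')) := by
  obtain ⟨m₀, hmin⟩ := exists_min hM
  have part2 : ∀ I v, consIdeal M I → repMap M I v → v ∈ M := by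
    intro I v hI hrep
    rcases hrep with ⟨_, hm⟩ | ⟨hne, hs⟩
    · exact hm.1
    · obtain ⟨w, hwM, hws⟩ := exists_supVec hM hI hne
      rw [supVec_unique hI.2.2 hs hws]
      exact hwM
  have part1 : ∀ I, consIdeal M I → ∃! v, repMap M I v := by
    intro I hI
    rcases Set.eq_empty_or_nonempty I with rfl | hne
    · refine ⟨m₀, Or.inl ⟨rfl, hmin⟩, ?_⟩
      rintro v (⟨_, hm⟩ | ⟨hne', _⟩)
      · exact preV_antisymm (hm.2 m₀ hmin.1) (hmin.2 v hm.1)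
      · exact absurd hne' Set.not_nonempty_empty
    · obtain ⟨w, hwM, hws⟩ := exists_supVec hM hI hne
      refine ⟨w, Or.inr ⟨hne, hws⟩, ?_⟩
      rintro v (⟨h, _⟩ | ⟨_, hs⟩)
      · exact absurd h hne.ne_empty
      · exact supVec_unique hI.2.2 hs hws
  have part3 : ∀ v ∈ M, ∃ I, consIdeal M I ∧ repMap M I v := by
    intro v hv
    refine ⟨{x | joinIrr M x ∧ preV x v}, ⟨fun x hx => hx.1,
      fun x y hx hy hxy => ⟨hx, preV_trans hxy hy.2⟩, ?_⟩, ?_⟩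
    · rintro x hx y hy ⟨i, hxi, hyi, hnexy⟩
      exact hnexy ((pre_ne (hx.2 i) hxi).trans (pre_ne (hy.2 i) hyi).symm)
    · by_cases hvm : v = m₀
      · left
        refine ⟨Set.eq_empty_iff_forall_notMem.mpr ?_, hvm ▸ hmin⟩
        rintro x ⟨hji, hle⟩
        have hxm : x = m₀ := preV_antisymm (hvm ▸ hle) (hmin.2 x hji.1)
        exact hji.2.1 (hxm ▸ hmin)
      · right
        have hkey := key hM hmin v hv hvm
        refine ⟨?_, fun i => ⟨?_, ?_⟩⟩
        · obtain ⟨x, hx, hle⟩ := hkey.1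
          exact ⟨x, hx, hle⟩
        · intro hvi
          obtain ⟨x, hx, hle, hxi⟩ := hkey.2 i hvi
          exact ⟨x, ⟨hx, hle⟩, hxi⟩
        · rintro hvi x ⟨_, hle⟩
          rcases hle i with h0 | he
          · exact h0
          · rw [he, hvi]
  refine ⟨part1, part2, part3, ?_⟩
  intro I I' v v' hI hI' hrep hrep'
  have hvM := part2 _ _ hI hrep
  have hv'M := part2 _ _ hI' hrep'
  rcases hrep with ⟨hIe, hm⟩ | ⟨hne, hs⟩
  · subst hIe
    exact ⟨fun _ => hm.2 v' hv'M, fun _ => Set.empty_subset _⟩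
  · rcases hrep' with ⟨hI'e, hm'⟩ | ⟨hne', hs'⟩
    · subst hI'e
      constructor
      · intro hsub
        obtain ⟨x, hx⟩ := hne
        exact absurd (hsub hx) (Set.notMem_empty x)
      · intro hle
        exfalso
        obtain ⟨x, hxI⟩ := hne
        have hxle : preV x v := supVec_ub hI.2.2 hs hxI
        have hxm : x = v' := preV_antisymm (preV_trans hxle hle) (hm'.2 x (hI.1 x hxI).1)
        exact (hI.1 x hxI).2.1 (hxm ▸ hm')
    · constructor
      · intro hsub i
        by_cases hvi : v i = 0
        · exact Or.inl hvi
        obtain ⟨x, hxI, hxi⟩ := (hs i).1 hvi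
        have hxv' : pre (x i) (v' i) := supVec_ub hI'.2.2 hs' (hsub hxI) i
        right
        rw [← hxi]
        exact pre_ne hxv' (by rw [hxi]; exact hvi)
      · intro hle x hxI
        exact joinIrr_mem_ideal hM hmin hI' hs' (hI.1 x hxI)
          (preV_trans (supVec_ub hI.2.2 hs hxI) hle)
end

section
/- Let M ⊆ S_k^n be a simple (⊓,⊔)-closed set and let x be a join-irreducible element of M. Then there exists a unique y ∈ M that is a lower cover of x, i.e., y ≺ x and there is no z ∈ M with y ≺ z ≺ x. -/
/-!
Any two elements below `x` are compatible, so two distinct lower covers `y`, `y'` of `x` have a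
join `y ⊔ y'` in `M` lying strictly above both and below `x`; being covers, this forces
`y ⊔ y' = x`, and then every upper bound of the elements strictly below `x` is above `x`,
contradicting join-irreducibility. A lower cover exists because the all-zero vector lies strictly
below `x` and `S_k^n` is finite.
-/

section Coordinate

variable {k : ℕ} {a b c : Fin (k + 1)}

lemma pre_or_pre_of_pre (ha : pre a c) (hb : pre b c) : pre a b ∨ pre b a := by
  rcases ha with rfl | rfl
  · exact Or.inl (Or.inl rfl)
  · rcases hb with rfl | rfl
    · exact Or.inr (Or.inl rfl)
    · exact Or.inl (Or.inr rfl)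

lemma pre_max_left (h : pre a b ∨ pre b a) : pre a (max a b) := by
  rcases h with (rfl | rfl) | (rfl | rfl)
  · exact Or.inl rfl
  · exact Or.inr (max_self _).symm
  · exact Or.inr (max_eq_left (Fin.zero_le _)).symm
  · exact Or.inr (max_self _).symm

lemma max_pre (ha : pre a c) (hb : pre b c) : pre (max a b) c := by
  rcases ha with rfl | rfl
  · rwa [max_eq_right (Fin.zero_le b)]
  · rcases hb with rfl | rfl
    · rw [max_eq_left (Fin.zero_le a)]; exact Or.inr rfl
    · rw [max_self]; exact Or.inr rfl

end Coordinate

section Vector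

variable {k n : ℕ} {x y z w : Fin n → Fin (k + 1)}

lemma sqcup_apply_of_preV (hx : preV x w) (hy : preV y w) (i : Fin n) :
    sqcup x y i = max (x i) (y i) :=
  if_pos (pre_or_pre_of_pre (hx i) (hy i))

lemma preV_sqcup_left (hx : preV x w) (hy : preV y w) : preV x (sqcup x y) := fun i => by
  rw [sqcup_apply_of_preV hx hy]
  exact pre_max_left (pre_or_pre_of_pre (hx i) (hy i))

lemma preV_sqcup_right (hx : preV x w) (hy : preV y w) : preV y (sqcup x y) := fun i => by
  rw [sqcup_apply_of_preV hx hy, max_comm]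
  exact pre_max_left (pre_or_pre_of_pre (hy i) (hx i))

lemma sqcup_preV (hx : preV x w) (hy : preV y w) : preV (sqcup x y) w := fun i => by
  rw [sqcup_apply_of_preV hx hy]
  exact max_pre (hx i) (hy i)

lemma supp_ssubset_of_strictPreV (h : strictPreV z w) : supp z ⊂ supp w := by
  have hsub : supp z ⊆ supp w := fun i hi => by
    rcases h.1 i with h0 | heq
    · exact absurd h0 hi
    · exact show w i ≠ 0 from heq ▸ hi
  refine Set.ssubset_iff_subset_ne.mpr ⟨hsub, fun hsupp => h.2 (funext fun i => ?_)⟩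
  rcases h.1 i with h0 | heq
  · have hi : i ∉ supp w := hsupp ▸ not_not.mpr h0
    exact h0.trans (not_not.mp hi).symm
  · exact heq

end Vector

section LowerCover

variable {k n : ℕ} {M : Set (Fin n → Fin (k + 1))} {x y y' : Fin n → Fin (k + 1)}

/-- The size of the support is strictly monotone, so an element strictly below `x` of maximal
support size is a lower cover. -/
lemma exists_lowerCover_of_strictPreV (hyM : y ∈ M) (hy : strictPreV y x) :
    ∃ z, lowerCover M z x := by
  obtain ⟨z, ⟨hzM, hz⟩, hmax⟩ :=
    Set.Finite.exists_maximalFor (fun z => (supp z).ncard) {z | z ∈ M ∧ strictPreV z x}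
      (Set.toFinite _) ⟨y, hyM, hy⟩
  refine ⟨z, hzM, hz, fun ⟨u, huM, hzu, hux⟩ => ?_⟩
  have hlt := Set.ncard_lt_ncard (supp_ssubset_of_strictPreV hzu)
  exact hlt.not_ge (hmax ⟨huM, hux⟩ hlt.le)

lemma sqcup_eq_of_lowerCover (hy : lowerCover M y x) (hy' : lowerCover M y' x)
    (hjoinM : sqcup y y' ∈ M) (hne : y ≠ y') : sqcup y y' = x := by
  by_contra hux
  have hjoin_lt : strictPreV (sqcup y y') x := ⟨sqcup_preV hy.2.1.1 hy'.2.1.1, hux⟩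
  have hy_eq : y = sqcup y y' := by
    by_contra h
    exact hy.2.2 ⟨_, hjoinM, ⟨preV_sqcup_left hy.2.1.1 hy'.2.1.1, h⟩, hjoin_lt⟩
  have hy'_eq : y' = sqcup y y' := by
    by_contra h
    exact hy'.2.2 ⟨_, hjoinM, ⟨preV_sqcup_right hy.2.1.1 hy'.2.1.1, h⟩, hjoin_lt⟩
  exact hne (hy_eq.trans hy'_eq.symm)

lemma isLUBof_of_sqcup_eq (hxM : x ∈ M) (hyM : y ∈ M) (hy'M : y' ∈ M) (hy : strictPreV y x)
    (hy' : strictPreV y' x) (hjoin : sqcup y y' = x) :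
    isLUBof M {z | z ∈ M ∧ strictPreV z x} x :=
  ⟨hxM, fun _ hz => hz.2.1, fun _ _ hub =>
    hjoin ▸ sqcup_preV (hub y ⟨hyM, hy⟩) (hub y' ⟨hy'M, hy'⟩)⟩

end LowerCover

theorem joinIrr_unique_lowerCover_general (k n : ℕ)
    (M : Set (Fin n → Fin (k + 1))) (hM : closedSet M) (hs : simpleSet M)
    (x : Fin n → Fin (k + 1)) (hx : joinIrr M x) :
    ∃! y, lowerCover M y x := by
  obtain ⟨hxM, hxmin, hxlub⟩ := hx
  have hzero : strictPreV (fun _ => 0) x := ⟨hs.2 x hxM, fun h => hxmin (h ▸ hs)⟩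
  obtain ⟨y, hy⟩ := exists_lowerCover_of_strictPreV hs.1 hzero
  refine ⟨y, hy, fun y' hy' => by_contra fun hne => hxlub ?_⟩
  exact isLUBof_of_sqcup_eq hxM hy'.1 hy.1 hy'.2.1 hy.2.1
    (sqcup_eq_of_lowerCover hy' hy (hM.2 y' hy'.1 y hy.1).2 hne)

/-- In a simple `(⊓,⊔)`-closed set, every join-irreducible element has a unique
lower cover. -/
theorem joinIrr_unique_lowerCover (k n : ℕ) (hk : 0 < k) (hn : 0 < n)
    (M : Set (Fin n → Fin (k + 1))) (hM : closedSet M) (hs : simpleSet M)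
    (x : Fin n → Fin (k + 1)) (hx : joinIrr M x) :
    ∃! y, lowerCover M y x :=
  joinIrr_unique_lowerCover_general k n M hM hs x hx
end

section
/- Let M ⊆ S_k^n be a (⊓,⊔)-closed set. Then the number of join-irreducible elements of M is at most k·n. -/
/-- Proposition: the number of join-irreducible elements of a `(⊓,⊔)`-closed set
on `S_k^n` is at most `k·n`. -/
theorem card_joinIrr_le (k n : ℕ) (hk : 0 < k) (hn : 0 < n)
    (M : Set (Fin n → Fin (k + 1))) (hM : closedSet M) :
    {x | joinIrr M x}.ncard ≤ k * n := by
  classical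
  set S : Set (Fin n → Fin (k + 1)) := {x | joinIrr M x} with hS
  have key : ∀ x, joinIrr M x → ∃ i, x i ≠ 0 ∧ ∀ z ∈ M, z i = x i → preV x z := by
    intro x hx
    obtain ⟨hxM, hmin, hlub⟩ := hx
    by_contra hcon
    push_neg at hcon
    apply hlub
    refine ⟨hxM, fun s hs => hs.2.1, ?_⟩
    intro w hw hwub i
    by_cases hxi : x i = 0
    · exact Or.inl hxi
    · obtain ⟨z, hzM, hzi, hnpre⟩ := hcon i hxi
      set u := sqcap x z with hu
      have huM : u ∈ M := (hM.2 x hxM z hzM).1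
      have hux : preV u x := by
        intro j
        simp only [hu, sqcap]
        split
        · rename_i hc
          rcases hc with hc | hc <;> rcases hc with h0 | he
          · left; rw [h0]; exact min_eq_left (Fin.zero_le _)
          · right; rw [← he, min_self]
          · left; rw [h0]; exact min_eq_right (Fin.zero_le _)
          · right; rw [he, min_self]
        · exact Or.inl rfl
      simp only [preV, not_forall] at hnpre
      obtain ⟨j, hj⟩ := hnpre
      have hj' : x j ≠ 0 ∧ x j ≠ z j := by
        unfold pre at hj; push_neg at hj; exact hj
      have hne : u ≠ x := by
        intro heq
        have : u j = x j := by rw [heq]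
        simp only [hu, sqcap] at this
        split at this
        · rename_i hc
          rcases hc with hc | hc
          · exact hj hc
          · rcases hc with h0 | he
            · rw [h0, min_eq_right (Fin.zero_le _)] at this
              exact hj'.1 this.symm
            · exact hj'.2 he.symm
        · exact hj'.1 this.symm
      have hpuw : preV u w := hwub u ⟨huM, hux, hne⟩
      have hui : u i = x i := by
        simp only [hu, sqcap, hzi, min_self, inf_idem]
        exact if_pos (Or.inl (Or.inr rfl))
      have := hpuw i
      rw [hui] at this
      rcases this with h0 | he
      · exact absurd h0 hxi
      · exact Or.inr he
  choose idx h1 h2 using fun x (hx : x ∈ S) => key x hx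
  have hval : ∀ x (hx : x ∈ S), (x (idx x hx)).val - 1 < k := by
    intro x hx
    have := h1 x hx
    have hlt : (x (idx x hx)).val < k + 1 := (x (idx x hx)).isLt
    have hpos : (x (idx x hx)).val ≠ 0 := by
      intro h0
      exact this (Fin.ext h0)
    omega
  set f : (Fin n → Fin (k + 1)) → Fin n × Fin k := fun x =>
    if hx : x ∈ S then (idx x hx, ⟨(x (idx x hx)).val - 1, hval x hx⟩)
    else (⟨0, hn⟩, ⟨0, hk⟩) with hf
  have hinj : Set.InjOn f S := by
    intro x hx y hy hxy
    simp only [hf, dif_pos hx, dif_pos hy, Prod.mk.injEq, Fin.mk.injEq] at hxy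
    obtain ⟨hidx, hvv⟩ := hxy
    have hx0 : (x (idx x hx)).val ≠ 0 := fun h0 => h1 x hx (Fin.ext h0)
    have hy0 : (y (idx y hy)).val ≠ 0 := fun h0 => h1 y hy (Fin.ext h0)
    have hvv' : (x (idx x hx)).val = (y (idx y hy)).val := by omega
    have hyi : y (idx x hx) = x (idx x hx) := by
      calc y (idx x hx) = y (idx y hy) := by rw [hidx]
        _ = x (idx x hx) := (Fin.ext hvv').symm
    have hxM : x ∈ M := hx.1
    have hyM : y ∈ M := hy.1
    have pxy : preV x y := h2 x hx y hyM hyi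
    have pyx : preV y x := by
      apply h2 y hy x hxM
      rw [← hidx]
      exact hyi.symm
    funext j
    rcases pxy j with h0 | he
    · rcases pyx j with h0' | he'
      · rw [h0, h0']
      · exact he'.symm
    · exact he
  have hmap : ∀ x ∈ S, f x ∈ (Set.univ : Set (Fin n × Fin k)) :=
    fun x _ => Set.mem_univ _
  have := Set.ncard_le_ncard_of_injOn f hmap hinj (Set.finite_univ)
  rwa [Set.ncard_univ, Nat.card_eq_fintype_card, Fintype.card_prod,
    Fintype.card_fin, Fintype.card_fin, Nat.mul_comm] at this
end

section
/- Let M ⊆ S_k^n be a simple (⊓,⊔)-closed set and let x, y be join-irreducible elements of M. Then either supp x̄ = supp ȳ or supp x̄ ∩ supp ȳ = ∅, where x̄, ȳ denote the differentials of x and y. -/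
lemma preV_sqcap_left {k n : ℕ} (x y : Fin n → Fin (k + 1)) : preV (sqcap x y) x := by
  intro i
  unfold sqcap pre
  split_ifs with h
  · rcases h with (h | h) | (h | h)
    · exact Or.inl (by rw [h]; exact min_eq_left (Fin.zero_le _))
    · exact Or.inr (by rw [h, min_self])
    · exact Or.inl (by rw [h]; exact min_eq_right (Fin.zero_le _))
    · exact Or.inr (by rw [h, min_self])
  · exact Or.inl rfl

lemma preV_sqcap_right {k n : ℕ} (x y : Fin n → Fin (k + 1)) : preV (sqcap x y) y := by
  intro i
  unfold sqcap pre
  split_ifs with h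
  · rcases h with (h | h) | (h | h)
    · exact Or.inl (by rw [h]; exact min_eq_left (Fin.zero_le _))
    · exact Or.inr (by rw [h, min_self])
    · exact Or.inl (by rw [h]; exact min_eq_right (Fin.zero_le _))
    · exact Or.inr (by rw [h, min_self])
  · exact Or.inl rfl

-- coordinate computations

lemma sqcap_eq_of_eq {k n : ℕ} {x y : Fin n → Fin (k + 1)} {i : Fin n}
    (h : x i = y i) : sqcap x y i = x i := by
  unfold sqcap
  rw [if_pos (Or.inl (show pre (x i) (y i) from Or.inr h)), h, min_self]

lemma sqcup_right_zero {k n : ℕ} {x y : Fin n → Fin (k + 1)} {i : Fin n}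
    (h : y i = 0) : sqcup x y i = x i := by
  unfold sqcup
  rw [if_pos (Or.inr (show pre (y i) (x i) from Or.inl h)), h]
  exact max_eq_left (Fin.zero_le _)

lemma sqcup_conflict {k n : ℕ} {x y : Fin n → Fin (k + 1)} {i : Fin n}
    (hx : x i ≠ 0) (hy : y i ≠ 0) (hxy : x i ≠ y i) : sqcup x y i = 0 := by
  unfold sqcup
  rw [if_neg]
  rintro ((h | h) | (h | h))
  · exact hx h
  · exact hxy h
  · exact hy h
  · exact hxy h.symm

/-- Key lemma: if `x` is join-irreducible with lower cover `u`, and `m ⪯ x` is an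
element of `M` that is nonzero at some coordinate `j` where `x` is nonzero but `u` is
zero, then `m = x`. -/
lemma claimC {k n : ℕ} {M : Set (Fin n → Fin (k + 1))}
    (hcl : ∀ a ∈ M, ∀ b ∈ M, sqcap a b ∈ M ∧ sqcup a b ∈ M)
    {x u m : Fin n → Fin (k + 1)}
    (hx : joinIrr M x) (hcov : lowerCover M u x)
    (hm : m ∈ M) (hmx : preV m x)
    {j : Fin n} (hxj : x j ≠ 0) (huj : u j = 0) (hmj : m j ≠ 0) :
    m = x := by
  by_contra hne
  have hxM : x ∈ M := hx.1
  have huM : u ∈ M := hcov.1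
  have hux : preV u x := hcov.2.1.1
  have hunx : u ≠ x := hcov.2.1.2
  set w := sqcup m u with hw
  have hwM : w ∈ M := (hcl m hm u huM).2
  -- coordinate description of w
  have hwc : ∀ i, (m i = 0 ∧ u i = 0 ∧ w i = 0) ∨ (w i = x i ∧ x i ≠ 0) := by
    intro i
    rcases hmx i with hm0 | hmx'
    · rcases hux i with hu0 | hux'
      · left
        refine ⟨hm0, hu0, ?_⟩
        have : w i = m i := sqcup_right_zero hu0
        rw [this, hm0]
      · by_cases hu0 : u i = 0
        · left
          refine ⟨hm0, hu0, ?_⟩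
          have : w i = m i := sqcup_right_zero hu0
          rw [this, hm0]
        · right
          constructor
          · have : w i = max (m i) (u i) := by
              unfold w
              unfold sqcup
              rw [if_pos (Or.inl (show pre (m i) (u i) from Or.inl hm0))]
            rw [this, hm0, hux']
            exact max_eq_right (Fin.zero_le _)
          · rw [← hux']; exact hu0
    · by_cases hm0 : m i = 0
      · rcases hux i with hu0 | hux'
        · left
          refine ⟨hm0, hu0, ?_⟩
          have : w i = m i := sqcup_right_zero hu0
          rw [this, hm0]
        · by_cases hu0 : u i = 0
          · left
            refine ⟨hm0, hu0, ?_⟩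
            have : w i = m i := sqcup_right_zero hu0
            rw [this, hm0]
          · right
            constructor
            · have : w i = max (m i) (u i) := by
                unfold w
                unfold sqcup
                rw [if_pos (Or.inl (show pre (m i) (u i) from Or.inl hm0))]
              rw [this, hm0, hux']
              exact max_eq_right (Fin.zero_le _)
            · rw [← hux']; exact hu0
      · right
        refine ⟨?_, by rw [← hmx']; exact hm0⟩
        rcases hux i with hu0 | hux'
        · have : w i = m i := sqcup_right_zero hu0
          rw [this, hmx']
        · have heq : m i = u i := by rw [hmx', hux']
          have : w i = max (m i) (u i) := by
            unfold w
            unfold sqcup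
            rw [if_pos (Or.inl (show pre (m i) (u i) from Or.inr heq))]
          rw [this, heq, max_self, hux']
  have hwx : preV w x := by
    intro i
    rcases hwc i with ⟨_, _, h0⟩ | ⟨heq, _⟩
    · exact Or.inl h0
    · exact Or.inr heq
  have huw : preV u w := by
    intro i
    rcases hwc i with ⟨_, h0, _⟩ | ⟨heq, _⟩
    · exact Or.inl h0
    · rcases hux i with h | h
      · exact Or.inl h
      · exact Or.inr (by rw [h, heq])
  have hwj : w j = m j := sqcup_right_zero huj
  have hwneu : w ≠ u := by
    intro h
    apply hmj
    rw [← hwj, h, huj]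
  -- w must equal x, since u is a lower cover
  have hwex : w = x := by
    by_contra hwnx
    exact hcov.2.2 ⟨w, hwM, ⟨huw, fun h => hwneu h.symm⟩, ⟨hwx, hwnx⟩⟩
  -- now x is the LUB of its strict lower set, contradicting join-irreducibility
  apply hx.2.2
  refine ⟨hxM, fun s hs => hs.2.1, ?_⟩
  intro w' hw' hub
  have hmw' : preV m w' := hub m ⟨hm, hmx, hne⟩
  have huw' : preV u w' := hub u ⟨huM, hux, hunx⟩
  intro i
  rcases hwc i with ⟨hm0, hu0, hw0⟩ | _
  · exact Or.inl (by rw [← hwex, hw0])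
  · by_cases hxi : x i = 0
    · exact Or.inl hxi
    · right
      have hwi : w i = x i := by rw [hwex]
      rcases hwc i with ⟨_, _, hw0⟩ | _
      · exact absurd (by rw [← hwi, hw0] : x i = 0) hxi
      · -- m i ≠ 0 or u i ≠ 0
        by_cases hm0 : m i = 0
        · by_cases hu0 : u i = 0
          · exfalso
            apply hxi
            rw [← hwi]
            have : w i = m i := sqcup_right_zero hu0
            rw [this, hm0]
          · have h1 : u i = x i := (hux i).resolve_left hu0
            have h2 : u i = w' i := (huw' i).resolve_left hu0
            rw [← h1, h2]
        · have h1 : m i = x i := (hmx i).resolve_left hm0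
          have h2 : m i = w' i := (hmw' i).resolve_left hm0
          rw [← h1, h2]

/-- If the differential supports of `x` and `y` meet at `i`, then any coordinate
in the differential support of `x` lies in the differential support of `y`. -/
lemma supp_subset_aux {k n : ℕ} {M : Set (Fin n → Fin (k + 1))}
    (hcl : ∀ a ∈ M, ∀ b ∈ M, sqcap a b ∈ M ∧ sqcup a b ∈ M)
    {x u y v : Fin n → Fin (k + 1)}
    (hx : joinIrr M x) (hcu : lowerCover M u x)
    (hy : joinIrr M y) (hcv : lowerCover M v y)
    {i : Fin n} (hxi : x i ≠ 0) (hui : u i = 0) (hyi : y i ≠ 0) (hvi : v i = 0)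
    {j : Fin n} (hxj : x j ≠ 0) (huj : u j = 0) : y j ≠ 0 ∧ v j = 0 := by
  have hxM : x ∈ M := hx.1
  have hyM : y ∈ M := hy.1
  have hvM : v ∈ M := hcv.1
  have hvy : preV v y := hcv.2.1.1
  -- Step 1 : y j ≠ 0
  have hyj : y j ≠ 0 := by
    by_cases hxy : x i = y i
    · -- use m = sqcap x y
      have hmM : sqcap x y ∈ M := (hcl x hxM y hyM).1
      have hmi : sqcap x y i ≠ 0 := by
        rw [sqcap_eq_of_eq hxy]; exact hxi
      have hmeq : sqcap x y = x :=
        claimC hcl hx hcu hmM (preV_sqcap_left x y) hxi hui hmi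
      have hxy' : preV x y := by
        have h := preV_sqcap_right x y
        rw [hmeq] at h
        exact h
      rcases hxy' j with h | h
      · exact absurd h hxj
      · rw [← h]; exact hxj
    · -- conflict at i; use t = sqcup x y, m = sqcap t x
      intro hyj0
      have htM : sqcup x y ∈ M := (hcl x hxM y hyM).2
      have hmM : sqcap (sqcup x y) x ∈ M := (hcl _ htM x hxM).1
      have htj : sqcup x y j = x j := sqcup_right_zero hyj0
      have hmj : sqcap (sqcup x y) x j ≠ 0 := by
        rw [sqcap_eq_of_eq htj, htj]; exact hxj
      have hmeq : sqcap (sqcup x y) x = x :=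
        claimC hcl hx hcu hmM (preV_sqcap_right _ x) hxj huj hmj
      have hxt : preV x (sqcup x y) := by
        have h := preV_sqcap_left (sqcup x y) x
        rw [hmeq] at h
        exact h
      have hti : sqcup x y i = 0 := sqcup_conflict hxi hyi hxy
      rcases hxt i with h | h
      · exact hxi h
      · exact hxi (by rw [h, hti])
  -- Step 2 : v j = 0
  have hvj : v j = 0 := by
    by_contra hvj0
    have hvjy : v j = y j := (hvy j).resolve_left hvj0
    by_cases h2 : v j = x j
    · -- m = sqcap v x
      have hmM : sqcap v x ∈ M := (hcl v hvM x hxM).1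
      have hmj : sqcap v x j ≠ 0 := by
        rw [sqcap_eq_of_eq h2, h2]; exact hxj
      have hmeq : sqcap v x = x :=
        claimC hcl hx hcu hmM (preV_sqcap_right v x) hxj huj hmj
      have hxv : preV x v := by
        have h := preV_sqcap_left v x
        rw [hmeq] at h
        exact h
      rcases hxv i with h | h
      · exact hxi h
      · exact hxi (by rw [h, hvi])
    · -- s = sqcup x v conflicts with x at j
      have hsM : sqcup x v ∈ M := (hcl x hxM v hvM).2
      have hmM : sqcap (sqcup x v) x ∈ M := (hcl _ hsM x hxM).1
      have hsi : sqcup x v i = x i := sqcup_right_zero hvi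
      have hmi : sqcap (sqcup x v) x i ≠ 0 := by
        rw [sqcap_eq_of_eq hsi, hsi]; exact hxi
      have hmeq : sqcap (sqcup x v) x = x :=
        claimC hcl hx hcu hmM (preV_sqcap_right _ x) hxi hui hmi
      have hxs : preV x (sqcup x v) := by
        have h := preV_sqcap_left (sqcup x v) x
        rw [hmeq] at h
        exact h
      have hsj : sqcup x v j = 0 :=
        sqcup_conflict hxj hvj0 (fun h => h2 h.symm)
      rcases hxs j with h | h
      · exact hxj h
      · exact hxj (by rw [h, hsj])
  exact ⟨hyj, hvj⟩

/-- For join-irreducible elements `x, y` of a simple `(⊓,⊔)`-closed set, the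
supports of the differentials are equal or disjoint. -/
theorem diff_supports_eq_or_disjoint (k n : ℕ) (hk : 0 < k) (hn : 0 < n)
    (M : Set (Fin n → Fin (k + 1))) (hM : closedSet M) (hs : simpleSet M)
    (x y d e : Fin n → Fin (k + 1))
    (hx : joinIrr M x) (hy : joinIrr M y)
    (hd : isDiff M x d) (he : isDiff M y e) :
    supp d = supp e ∨ supp d ∩ supp e = ∅ := by
  obtain ⟨u, hcu, hdu⟩ := hd
  obtain ⟨v, hcv, hev⟩ := he
  have hcl := hM.2
  have hsd : ∀ i, i ∈ supp d ↔ (x i ≠ 0 ∧ u i = 0) := by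
    intro i
    constructor
    · intro h
      by_contra hc
      exact h (by rw [hdu i, if_neg hc])
    · intro h
      show d i ≠ 0
      rw [hdu i, if_pos h]
      exact h.1
  have hse : ∀ i, i ∈ supp e ↔ (y i ≠ 0 ∧ v i = 0) := by
    intro i
    constructor
    · intro h
      by_contra hc
      exact h (by rw [hev i, if_neg hc])
    · intro h
      show e i ≠ 0
      rw [hev i, if_pos h]
      exact h.1
  by_cases hdis : supp d ∩ supp e = ∅
  · exact Or.inr hdis
  · left
    obtain ⟨i, hid, hie⟩ := Set.nonempty_iff_ne_empty.mpr hdis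
    obtain ⟨hxi, hui⟩ := (hsd i).mp hid
    obtain ⟨hyi, hvi⟩ := (hse i).mp hie
    ext j
    constructor
    · intro hj
      obtain ⟨hxj, huj⟩ := (hsd j).mp hj
      exact (hse j).mpr (supp_subset_aux hcl hx hcu hy hcv hxi hui hyi hvi hxj huj)
    · intro hj
      obtain ⟨hyj, hvj⟩ := (hse j).mp hj
      exact (hsd j).mpr (supp_subset_aux hcl hy hcv hx hcu hyi hvi hxi hui hyj hvj)
end

section
/- Let M ⊆ S_k^n be a normalized (⊓,⊔)-closed set, and for each i let J_i = {x ∈ J(M) : supp x̄ = {i}}. Let i ≠ j with |J_i| ≥ 2 and |J_j| ≥ 2. Then either (a) no element of J_i is ⪯-comparable with any element of J_j, or (b) there exist x° ∈ J_i and y° ∈ J_j such that x° ≺ y for every y ∈ J_j with y ≠ y°, and y° ≺ x for every x ∈ J_i with x ≠ x°. -/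
/-- A simple `(⊓,⊔)`-closed set is normalized if the differential of every
join-irreducible element has exactly one nonzero component. -/
def normalizedSet {k n : ℕ} (M : Set (Fin n → Fin (k + 1))) : Prop :=
  simpleSet M ∧ ∀ x, joinIrr M x → ∃ d, isDiff M x d ∧ ∃! i, d i ≠ 0

/-- `J_i`: the set of join-irreducible elements of `M` whose differential has
support `{i}`. -/
def Ji {k n : ℕ} (M : Set (Fin n → Fin (k + 1))) (i : Fin n) :
    Set (Fin n → Fin (k + 1)) :=
  {x | joinIrr M x ∧ ∃ d, isDiff M x d ∧ supp d = {i}}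

namespace EP2Aux

variable {k n : ℕ}

lemma pre_zero {a : Fin (k+1)} : pre 0 a := Or.inl rfl

lemma pre_refl {a : Fin (k+1)} : pre a a := Or.inr rfl

lemma pre_trans {a b c : Fin (k+1)} (h1 : pre a b) (h2 : pre b c) : pre a c := by
  rcases h1 with h1 | h1
  · exact Or.inl h1
  · subst h1; exact h2

lemma pre_zero_right {a : Fin (k+1)} (h : pre a 0) : a = 0 := by
  rcases h with h | h <;> exact h

lemma preV_refl {x : Fin n → Fin (k+1)} : preV x x := fun _ => pre_refl

lemma preV_trans {x y z : Fin n → Fin (k+1)} (h1 : preV x y) (h2 : preV y z) : preV x z :=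
  fun i => pre_trans (h1 i) (h2 i)

lemma preV_antisymm {x y : Fin n → Fin (k+1)} (h1 : preV x y) (h2 : preV y x) : x = y := by
  funext i
  rcases h1 i with h | h
  · rcases h2 i with h' | h'
    · rw [h, h']
    · exact h'.symm
  · exact h

lemma sqcap_le_left {x y : Fin n → Fin (k+1)} : preV (sqcap x y) x := by
  intro i
  show pre (if pre (x i) (y i) ∨ pre (y i) (x i) then min (x i) (y i) else 0) (x i)
  split
  · rename_i h
    rcases h with (h | h) | (h | h)
    · rw [h, min_eq_left (Fin.zero_le _)]; exact pre_zero
    · rw [h, min_self]; exact pre_refl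
    · rw [h, min_eq_right (Fin.zero_le _)]; exact pre_zero
    · rw [h, min_self]; exact pre_refl
  · exact pre_zero

lemma sqcap_le_right {x y : Fin n → Fin (k+1)} : preV (sqcap x y) y := by
  intro i
  show pre (if pre (x i) (y i) ∨ pre (y i) (x i) then min (x i) (y i) else 0) (y i)
  split
  · rename_i h
    rcases h with (h | h) | (h | h)
    · rw [h, min_eq_left (Fin.zero_le _)]; exact pre_zero
    · rw [h, min_self]; exact pre_refl
    · rw [h, min_eq_right (Fin.zero_le _)]; exact pre_zero
    · rw [h, min_self]; exact pre_refl
  · exact pre_zero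

lemma le_sqcap {z x y : Fin n → Fin (k+1)} (h1 : preV z x) (h2 : preV z y) :
    preV z (sqcap x y) := by
  intro i
  show pre (z i) (if pre (x i) (y i) ∨ pre (y i) (x i) then min (x i) (y i) else 0)
  rcases h1 i with h | h
  · exact Or.inl h
  · rcases h2 i with h' | h'
    · exact Or.inl h'
    · have hxy : x i = y i := by rw [← h, ← h']
      have hcond : pre (x i) (y i) ∨ pre (y i) (x i) := Or.inl (Or.inr hxy)
      rw [if_pos hcond, ← hxy, min_self]
      exact Or.inr h

lemma pre_sqcup_aux {a b c : Fin (k+1)} (ha : pre a c) (hb : pre b c) :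
    pre (if pre a b ∨ pre b a then max a b else 0) c ∧
    pre a (if pre a b ∨ pre b a then max a b else 0) ∧
    pre b (if pre a b ∨ pre b a then max a b else 0) := by
  rcases ha with ha | ha
  · have hcond : pre a b ∨ pre b a := Or.inl (Or.inl ha)
    rw [if_pos hcond, ha, max_eq_right (Fin.zero_le _)]
    exact ⟨hb, Or.inl rfl, pre_refl⟩
  · rcases hb with hb | hb
    · have hcond : pre a b ∨ pre b a := Or.inr (Or.inl hb)
      rw [if_pos hcond, hb, max_eq_left (Fin.zero_le _)]
      exact ⟨Or.inr ha, pre_refl, Or.inl rfl⟩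
    · have hab : a = b := by rw [ha, hb]
      have hcond : pre a b ∨ pre b a := Or.inl (Or.inr hab)
      rw [if_pos hcond, ← hab, max_self]
      exact ⟨Or.inr ha, pre_refl, pre_refl⟩

lemma preV_sqcup {u z m : Fin n → Fin (k+1)} (hu : preV u m) (hz : preV z m) :
    preV (sqcup u z) m ∧ preV u (sqcup u z) ∧ preV z (sqcup u z) :=
  ⟨fun i => (pre_sqcup_aux (hu i) (hz i)).1,
   fun i => (pre_sqcup_aux (hu i) (hz i)).2.1,
   fun i => (pre_sqcup_aux (hu i) (hz i)).2.2⟩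

lemma covMax {M : Set (Fin n → Fin (k+1))} (hM : closedSet M) {x : Fin n → Fin (k+1)}
    (hx : joinIrr M x) :
    ∃ u ∈ M, strictPreV u x ∧ ∀ z ∈ M, strictPreV z x → preV z u := by
  obtain ⟨hxM, -, hnl⟩ := hx
  have hB : ∀ s ∈ {y | y ∈ M ∧ strictPreV y x}, preV s x := fun s hs => hs.2.1
  have hC : ¬ ∀ w ∈ M, (∀ s ∈ {y | y ∈ M ∧ strictPreV y x}, preV s w) → preV x w :=
    fun hC => hnl ⟨hxM, hB, hC⟩
  push_neg at hC
  obtain ⟨w, hwM, hub, hnxw⟩ := hC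
  refine ⟨sqcap x w, (hM.2 x hxM w hwM).1, ⟨sqcap_le_left, ?_⟩, ?_⟩
  · intro he
    exact hnxw (he ▸ (sqcap_le_right : preV (sqcap x w) w))
  · intro z hz hzx
    exact le_sqcap hzx.1 (hub z ⟨hz, hzx⟩)

lemma JiCov {M : Set (Fin n → Fin (k+1))} (hM : closedSet M) {i : Fin n}
    {x : Fin n → Fin (k+1)} (hx : x ∈ Ji M i) :
    x ∈ M ∧ x i ≠ 0 ∧ ∃ u ∈ M, strictPreV u x ∧ (∀ l, u l = if l = i then 0 else x l) ∧
      ∀ z ∈ M, strictPreV z x → preV z u := by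
  obtain ⟨hji, d, ⟨y, ⟨hyM, hyx, hnomid⟩, hd⟩, hsupp⟩ := hx
  obtain ⟨u, huM, hux, humax⟩ := covMax hM hji
  have hyu : y = u := by
    by_contra hne
    exact hnomid ⟨u, huM, ⟨humax y hyM hyx, hne⟩, hux⟩
  subst hyu
  have hdi : d i ≠ 0 := by
    have : i ∈ supp d := by rw [hsupp]; rfl
    exact this
  rw [hd i] at hdi
  have hxi : x i ≠ 0 ∧ y i = 0 := by
    by_cases h : x i ≠ 0 ∧ y i = 0
    · exact h
    · rw [if_neg h] at hdi; exact absurd rfl hdi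
  have hyeq : ∀ l, y l = if l = i then 0 else x l := by
    intro l
    by_cases hl : l = i
    · rw [if_pos hl, hl, hxi.2]
    · rw [if_neg hl]
      have hdl : d l = 0 := by
        by_contra hdl
        have : l ∈ supp d := hdl
        rw [hsupp] at this
        exact hl this
      rw [hd l] at hdl
      have hno : ¬ (x l ≠ 0 ∧ y l = 0) := by
        intro hcon
        rw [if_pos hcon] at hdl
        exact hcon.1 hdl
      rcases hyx.1 l with h | h
      · by_cases hx0 : x l = 0
        · rw [h, hx0]
        · exact absurd ⟨hx0, h⟩ hno
      · exact h
  exact ⟨hji.1, hxi.1, y, hyM, hyx, hyeq, humax⟩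

lemma Ji_mem {M : Set (Fin n → Fin (k+1))} {i : Fin n} {x : Fin n → Fin (k+1)}
    (hx : x ∈ Ji M i) : x ∈ M := hx.1.1

lemma K1 {M : Set (Fin n → Fin (k+1))} (hM : closedSet M) {i : Fin n}
    {x z : Fin n → Fin (k+1)} (hx : x ∈ Ji M i) (hz : z ∈ M) (h : z i = x i) :
    preV x z := by
  obtain ⟨hxM, hxi, u, huM, hux, hueq, humax⟩ := JiCov hM hx
  have htM := (hM.2 x hxM z hz).1
  have hti : sqcap x z i = x i := by
    show (if pre (x i) (z i) ∨ pre (z i) (x i) then min (x i) (z i) else 0) = x i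
    have hcond : pre (x i) (z i) ∨ pre (z i) (x i) := Or.inl (Or.inr h.symm)
    rw [if_pos hcond, h, min_self]
  have htx : sqcap x z = x := by
    by_contra hne
    have h1 := humax _ htM ⟨sqcap_le_left, hne⟩
    have h2 := h1 i
    rw [hueq i, if_pos rfl, hti] at h2
    exact hxi (pre_zero_right h2)
  exact htx ▸ (sqcap_le_right : preV (sqcap x z) z)

lemma Ji_inj {M : Set (Fin n → Fin (k+1))} (hM : closedSet M) {i : Fin n}
    {x x' : Fin n → Fin (k+1)} (hx : x ∈ Ji M i) (hx' : x' ∈ Ji M i)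
    (h : x i = x' i) : x = x' :=
  preV_antisymm (K1 hM hx (Ji_mem hx') h.symm) (K1 hM hx' (Ji_mem hx) h)

lemma Ji_disj {M : Set (Fin n → Fin (k+1))} (hM : closedSet M) {i j : Fin n}
    (hij : i ≠ j) {x : Fin n → Fin (k+1)} (hx : x ∈ Ji M i) : x ∉ Ji M j := by
  intro hx'
  obtain ⟨hxM, hxi, u, huM, hux, hueq, humax⟩ := JiCov hM hx
  obtain ⟨-, -, u', hu'M, hu'x, hu'eq, -⟩ := JiCov hM hx'
  have h2 := (humax u' hu'M hu'x) i
  rw [hueq i, if_pos rfl, hu'eq i, if_neg hij] at h2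
  exact hxi (pre_zero_right h2)

lemma H1 {M : Set (Fin n → Fin (k+1))} (hM : closedSet M) {i j : Fin n} (hij : i ≠ j)
    {y y' : Fin n → Fin (k+1)} (hy : y ∈ Ji M j) (hy' : y' ∈ Ji M j)
    (h : y i ≠ 0) (h' : y' i ≠ 0) : y i = y' i := by
  by_contra hne
  obtain ⟨hyM, hyj, -⟩ := JiCov hM hy
  obtain ⟨hy'M, -, u', hu'M, -, hu'eq, -⟩ := JiCov hM hy'
  have hwM := (hM.2 y hyM u' hu'M).2
  have hwj : sqcup y u' j = y j := by
    show (if pre (y j) (u' j) ∨ pre (u' j) (y j) then max (y j) (u' j) else 0) = y j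
    rw [hu'eq j, if_pos rfl]
    have hcond : pre (y j) (0 : Fin (k+1)) ∨ pre (0 : Fin (k+1)) (y j) := Or.inr (Or.inl rfl)
    rw [if_pos hcond, max_eq_left (Fin.zero_le _)]
  have hwi : sqcup y u' i = 0 := by
    show (if pre (y i) (u' i) ∨ pre (u' i) (y i) then max (y i) (u' i) else 0) = 0
    rw [hu'eq i, if_neg hij, if_neg]
    rintro ((hc | hc) | (hc | hc))
    · exact h hc
    · exact hne hc
    · exact h' hc
    · exact hne hc.symm
  have := (K1 hM hy hwM hwj) i
  rw [hwi] at this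
  exact h (pre_zero_right this)

lemma lemE {M : Set (Fin n → Fin (k+1))} (hM : closedSet M) {i j : Fin n}
    {y1 x : Fin n → Fin (k+1)} (hy1 : y1 ∈ Ji M j) (hx : x ∈ Ji M i)
    (hne : x i ≠ y1 i) (h : y1 i ≠ 0) : x j ≠ 0 := by
  obtain ⟨hy1M, hy1j, -⟩ := JiCov hM hy1
  obtain ⟨hxM, hxi, -⟩ := JiCov hM hx
  intro he
  have hwM := (hM.2 y1 hy1M x hxM).2
  have hwj : sqcup y1 x j = y1 j := by
    show (if pre (y1 j) (x j) ∨ pre (x j) (y1 j) then max (y1 j) (x j) else 0) = y1 j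
    have hcond : pre (y1 j) (x j) ∨ pre (x j) (y1 j) := Or.inr (Or.inl he)
    rw [if_pos hcond, he, max_eq_left (Fin.zero_le _)]
  have hwi : sqcup y1 x i = 0 := by
    show (if pre (y1 i) (x i) ∨ pre (x i) (y1 i) then max (y1 i) (x i) else 0) = 0
    rw [if_neg]
    rintro ((hc | hc) | (hc | hc))
    · exact h hc
    · exact hne hc.symm
    · exact hxi hc
    · exact hne hc
  have := (K1 hM hy1 hwM hwj) i
  rw [hwi] at this
  exact h (pre_zero_right this)

lemma meetMin {T : Set (Fin n → Fin (k+1))} (hne : T.Nonempty)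
    (hcl : ∀ a ∈ T, ∀ b ∈ T, sqcap a b ∈ T) : ∃ m ∈ T, ∀ z ∈ T, preV m z := by
  classical
  obtain ⟨a, ha⟩ := hne
  have key : ∀ S : Finset (Fin n → Fin (k+1)),
      ∃ m ∈ T, preV m a ∧ ∀ z ∈ S, z ∈ T → preV m z := by
    intro S
    induction S using Finset.induction with
    | empty => exact ⟨a, ha, preV_refl, by simp⟩
    | @insert b S hb ih =>
      obtain ⟨m, hmT, hma, hmS⟩ := ih
      by_cases hbT : b ∈ T
      · refine ⟨sqcap m b, hcl m hmT b hbT, preV_trans sqcap_le_left hma, ?_⟩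
        intro z hz hzT
        rcases Finset.mem_insert.1 hz with h | h
        · subst h; exact sqcap_le_right
        · exact preV_trans sqcap_le_left (hmS z h hzT)
      · refine ⟨m, hmT, hma, ?_⟩
        intro z hz hzT
        rcases Finset.mem_insert.1 hz with h | h
        · subst h; exact absurd hzT hbT
        · exact hmS z h hzT
  obtain ⟨m, hmT, -, hall⟩ := key Finset.univ
  exact ⟨m, hmT, fun z hz => hall z (Finset.mem_univ z) hz⟩

lemma joinBound {M : Set (Fin n → Fin (k+1))} (hM : closedSet M)
    (h0 : (fun _ => (0 : Fin (k+1))) ∈ M) {m : Fin n → Fin (k+1)} {j : Fin n}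
    (hz0 : ∀ z ∈ M, strictPreV z m → z j = 0) :
    ∃ u ∈ M, u j = 0 ∧ ∀ z ∈ M, strictPreV z m → preV z u := by
  classical
  have key : ∀ S : Finset (Fin n → Fin (k+1)),
      ∃ u ∈ M, u j = 0 ∧ preV u m ∧ ∀ z ∈ S, z ∈ M → strictPreV z m → preV z u := by
    intro S
    induction S using Finset.induction with
    | empty => exact ⟨fun _ => 0, h0, rfl, fun _ => pre_zero, by simp⟩
    | @insert b S hb ih =>
      obtain ⟨u, huM, huj, hum, hS⟩ := ih
      by_cases hbc : b ∈ M ∧ strictPreV b m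
      · have hwM := (hM.2 u huM b hbc.1).2
        have h3 := preV_sqcup hum hbc.2.1
        have hwj : sqcup u b j = 0 := by
          show (if pre (u j) (b j) ∨ pre (b j) (u j) then max (u j) (b j) else 0) = 0
          rw [huj, hz0 b hbc.1 hbc.2]
          have hcond : pre (0 : Fin (k+1)) (0 : Fin (k+1)) ∨ pre (0 : Fin (k+1)) (0 : Fin (k+1)) :=
            Or.inl (Or.inl rfl)
          rw [if_pos hcond, max_self]
        refine ⟨sqcup u b, hwM, hwj, h3.1, ?_⟩
        intro z hz hzM hzm
        rcases Finset.mem_insert.1 hz with h | h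
        · subst h; exact h3.2.2
        · exact preV_trans (hS z h hzM hzm) h3.2.1
      · refine ⟨u, huM, huj, hum, ?_⟩
        intro z hz hzM hzm
        rcases Finset.mem_insert.1 hz with h | h
        · subst h; exact absurd ⟨hzM, hzm⟩ hbc
        · exact hS z h hzM hzm
  obtain ⟨u, h1, h2, -, h4⟩ := key Finset.univ
  exact ⟨u, h1, h2, fun z hz hzm => h4 z (Finset.mem_univ z) hz hzm⟩

lemma lemF {M : Set (Fin n → Fin (k+1))} (hM : closedSet M) (hnorm : normalizedSet M)
    {i j : Fin n} {x : Fin n → Fin (k+1)} (hx : x ∈ Ji M i) (he : x j ≠ 0) :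
    ∃ y ∈ Ji M j, y j = x j := by
  classical
  have hxM : x ∈ M := Ji_mem hx
  have hTne : Set.Nonempty {z | z ∈ M ∧ z j = x j} := ⟨x, hxM, rfl⟩
  have hTcl : ∀ a ∈ {z | z ∈ M ∧ z j = x j}, ∀ b ∈ {z | z ∈ M ∧ z j = x j},
      sqcap a b ∈ {z | z ∈ M ∧ z j = x j} := by
    intro a ha b hb
    refine ⟨(hM.2 a ha.1 b hb.1).1, ?_⟩
    show (if pre (a j) (b j) ∨ pre (b j) (a j) then min (a j) (b j) else 0) = x j
    have hab : a j = b j := by rw [ha.2, hb.2]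
    have hcond : pre (a j) (b j) ∨ pre (b j) (a j) := Or.inl (Or.inr hab)
    rw [if_pos hcond, hab, min_self, hb.2]
  obtain ⟨m, hmT, hmmin⟩ := meetMin hTne hTcl
  have hmM : m ∈ M := hmT.1
  have hmj : m j = x j := hmT.2
  have h0M : (fun _ => (0 : Fin (k+1))) ∈ M := hnorm.1.1
  have hz0 : ∀ z ∈ M, strictPreV z m → z j = 0 := by
    intro z hz hzm
    rcases hzm.1 j with h | h
    · exact h
    · exfalso
      have hzT : z ∈ {z | z ∈ M ∧ z j = x j} := ⟨hz, h.trans hmj⟩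
      exact hzm.2 (preV_antisymm hzm.1 (hmmin z hzT))
  obtain ⟨u, huM, huj, hub⟩ := joinBound hM h0M hz0
  have hmj0 : m j ≠ 0 := by rw [hmj]; exact he
  have hmJI : joinIrr M m := by
    refine ⟨hmM, ?_, ?_⟩
    · intro hmin
      exact hmj0 (pre_zero_right ((hmin.2 _ h0M) j))
    · intro hlub
      have := (hlub.2.2 u huM (fun s hs => hub s hs.1 hs.2)) j
      rw [huj] at this
      exact hmj0 (pre_zero_right this)
  obtain ⟨d, ⟨y, hyc, hd⟩, l0, hl0, hluniq⟩ := hnorm.2 m hmJI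
  have hyj : y j = 0 := hz0 y hyc.1 hyc.2.1
  have hdj : d j ≠ 0 := by
    rw [hd j, if_pos ⟨hmj0, hyj⟩]
    exact hmj0
  have hjl0 : j = l0 := hluniq j hdj
  refine ⟨m, ⟨hmJI, d, ⟨y, hyc, hd⟩, ?_⟩, hmj⟩
  ext l
  simp only [supp, Set.mem_setOf_eq, Set.mem_singleton_iff]
  constructor
  · intro h
    rw [hluniq l h, ← hjl0]
  · intro h
    subst h
    exact hdj

lemma mainLem {M : Set (Fin n → Fin (k+1))} (hM : closedSet M) (hnorm : normalizedSet M)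
    {i j : Fin n} (hij : i ≠ j) (hi : 1 < (Ji M i).ncard)
    {x1 y1 : Fin n → Fin (k+1)} (hx1 : x1 ∈ Ji M i) (hy1 : y1 ∈ Ji M j)
    (hcomp : preV x1 y1) :
    ∃ x0 ∈ Ji M i, ∃ y0 ∈ Ji M j,
      (∀ y ∈ Ji M j, y ≠ y0 → strictPreV x0 y) ∧
      (∀ x ∈ Ji M i, x ≠ x0 → strictPreV y0 x) := by
  classical
  obtain ⟨hx1M, hx1i, -⟩ := JiCov hM hx1
  have hc : y1 i = x1 i := by
    rcases hcomp i with h | h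
    · exact absurd h hx1i
    · exact h.symm
  have hy1i : y1 i ≠ 0 := by rw [hc]; exact hx1i
  obtain ⟨a, b, haJ, hbJ, hab⟩ := (Set.one_lt_ncard_iff (Set.toFinite _)).1 hi
  have hx2ex : ∃ x2 ∈ Ji M i, x2 ≠ x1 := by
    by_cases h : a = x1
    · exact ⟨b, hbJ, by rw [← h]; exact hab.symm⟩
    · exact ⟨a, haJ, h⟩
  obtain ⟨x2, hx2J, hx2ne⟩ := hx2ex
  have hx2iy : x2 i ≠ y1 i := by
    rw [hc]; exact fun h => hx2ne (Ji_inj hM hx2J hx1 h)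
  have hx2j : x2 j ≠ 0 := lemE hM hy1 hx2J hx2iy hy1i
  obtain ⟨y0, hy0J, hy0j⟩ := lemF hM hnorm hx2J hx2j
  refine ⟨x1, hx1, y0, hy0J, ?_, ?_⟩
  · intro y hyJ hyne
    have hyj : y j ≠ x2 j := by
      rw [← hy0j]; exact fun h => hyne (Ji_inj hM hyJ hy0J h)
    have hyi0 : y i ≠ 0 := lemE hM hx2J hyJ hyj hx2j
    have hyi : y i = x1 i := by rw [H1 hM hij hyJ hy1 hyi0 hy1i, hc]
    refine ⟨K1 hM hx1 (Ji_mem hyJ) hyi, ?_⟩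
    intro h
    exact Ji_disj hM hij hx1 (by rw [h]; exact hyJ)
  · intro x hxJ hxne
    have hxi : x i ≠ y1 i := by
      rw [hc]; exact fun h => hxne (Ji_inj hM hxJ hx1 h)
    have hxj0 : x j ≠ 0 := lemE hM hy1 hxJ hxi hy1i
    have hxj : x j = y0 j := by rw [H1 hM hij.symm hxJ hx2J hxj0 hx2j, hy0j]
    refine ⟨K1 hM hy0J (Ji_mem hxJ) hxj, ?_⟩
    intro h
    exact Ji_disj hM hij.symm hy0J (by rw [h]; exact hxJ)

end EP2Aux


/-- (EP2): in a normalized `(⊓,⊔)`-closed set, two parts `J_i, J_j` of size at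
least 2 are either completely incomparable, or related as in (EP2-2). -/
theorem normalized_EP2 (k n : ℕ) (hk : 0 < k) (hn : 0 < n)
    (M : Set (Fin n → Fin (k + 1))) (hM : closedSet M) (hnorm : normalizedSet M)
    (i j : Fin n) (hij : i ≠ j)
    (hi : 1 < (Ji M i).ncard) (hj : 1 < (Ji M j).ncard) :
    (∀ x ∈ Ji M i, ∀ y ∈ Ji M j, ¬ preV x y ∧ ¬ preV y x) ∨
    (∃ x0 ∈ Ji M i, ∃ y0 ∈ Ji M j,
      (∀ y ∈ Ji M j, y ≠ y0 → strictPreV x0 y) ∧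
      (∀ x ∈ Ji M i, x ≠ x0 → strictPreV y0 x)) := by
  classical
  by_cases hA : ∀ x ∈ Ji M i, ∀ y ∈ Ji M j, ¬ preV x y ∧ ¬ preV y x
  · exact Or.inl hA
  · right
    push_neg at hA
    obtain ⟨x, hx, y, hy, hxy⟩ := hA
    by_cases hpxy : preV x y
    · exact EP2Aux.mainLem hM hnorm hij hi hx hy hpxy
    · obtain ⟨X0, hX0, Y0, hY0, h1, h2⟩ :=
        EP2Aux.mainLem hM hnorm hij.symm hj hy hx (hxy hpxy)
      exact ⟨Y0, hY0, X0, hX0, h2, h1⟩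
end
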